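/- Let ‖·‖ be a permutation-invariant norm on M_n(ℝ) and 𝓡 a convex permutation-invariant constraint set. If A ∈ 𝓡 is a Chebyshev center of Ω_n relative to 𝓡, then ‖A − P‖ equals the Chebyshev radius R for every permutation matrix P; i.e., a Chebyshev center is equidistant from all permutation matrices. -/
import Mathlib

open Matrix Finset

/-- `P` is a permutation matrix. -/
def IsPermMatrix {n : ℕ} (P : Matrix (Fin n) (Fin n) ℝ) : Prop :=
  ∃ σ : Equiv.Perm (Fin n), P = σ.permMatrix ℝ

/-- `D` is doubly stochastic: nonnegative entries, all row and column sums equal `1`. -/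
def IsDoublyStochastic {n : ℕ} (D : Matrix (Fin n) (Fin n) ℝ) : Prop :=
  (∀ i j, 0 ≤ D i j) ∧ (∀ i, ∑ j, D i j = 1) ∧ (∀ j, ∑ i, D i j = 1)

/-- `N` is a norm on `M_n(ℝ)`. -/
def IsMatrixNorm {n : ℕ} (N : Matrix (Fin n) (Fin n) ℝ → ℝ) : Prop :=
  (∀ A, 0 ≤ N A) ∧ (∀ A, N A = 0 ↔ A = 0) ∧
    (∀ A B, N (A + B) ≤ N A + N B) ∧ (∀ (c : ℝ) A, N (c • A) = |c| * N A)

/-- `N` is permutation-invariant: `N (P * A * Q) = N A` for permutation matrices `P, Q`. -/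
def PermInvariantNorm {n : ℕ} (N : Matrix (Fin n) (Fin n) ℝ → ℝ) : Prop :=
  ∀ P Q A, IsPermMatrix P → IsPermMatrix Q → N (P * A * Q) = N A

/-- A set of matrices is permutation-invariant if it is stable under two-sided
multiplication by permutation matrices. -/
def PermInvariantSet {n : ℕ} (R : Set (Matrix (Fin n) (Fin n) ℝ)) : Prop :=
  ∀ P Q K, IsPermMatrix P → IsPermMatrix Q → K ∈ R → P * K * Q ∈ R

/-- The radius `sup_{D ∈ Ω_n} N (A - D)` of the smallest bounding ball of the Birkhoff
polytope centered at `A`, with respect to the norm `N`. -/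
noncomputable def radAt {n : ℕ} (N : Matrix (Fin n) (Fin n) ℝ → ℝ)
    (A : Matrix (Fin n) (Fin n) ℝ) : ℝ :=
  sSup ((fun D => N (A - D)) '' {D | IsDoublyStochastic D})

/-- `A` is a Chebyshev center of the Birkhoff polytope relative to the norm `N` and the
constraint set `R`: `A ∈ R` and `A` attains `inf_{B ∈ R} sup_{D ∈ Ω_n} N (B - D)`. -/
def IsChebCenter {n : ℕ} (N : Matrix (Fin n) (Fin n) ℝ → ℝ)
    (R : Set (Matrix (Fin n) (Fin n) ℝ)) (A : Matrix (Fin n) (Fin n) ℝ) : Prop :=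
  A ∈ R ∧ radAt N A = sInf (radAt N '' R)

/- ### Auxiliary lemmas -/

lemma permMatrix_mul' {n : ℕ} (α β : Equiv.Perm (Fin n)) :
    α.permMatrix ℝ * β.permMatrix ℝ = (β * α).permMatrix ℝ := by
  show (α.toPEquiv.toMatrix : Matrix _ _ ℝ) * β.toPEquiv.toMatrix = _
  rw [← PEquiv.toMatrix_trans, ← Equiv.toPEquiv_trans]
  rfl

lemma permMatrix_one' {n : ℕ} : ((1 : Equiv.Perm (Fin n)).permMatrix ℝ) = 1 := by
  show ((1 : Equiv.Perm (Fin n)).toPEquiv.toMatrix : Matrix _ _ ℝ) = 1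
  rw [show (1 : Equiv.Perm (Fin n)) = Equiv.refl (Fin n) from rfl, Equiv.toPEquiv_refl,
    PEquiv.toMatrix_refl]

lemma isDS_iff {n : ℕ} (D : Matrix (Fin n) (Fin n) ℝ) :
    IsDoublyStochastic D ↔ D ∈ doublyStochastic ℝ (Fin n) := by
  rw [mem_doublyStochastic_iff_sum]; rfl

lemma perm_isDS {n : ℕ} {P : Matrix (Fin n) (Fin n) ℝ} (hP : IsPermMatrix P) :
    IsDoublyStochastic P := by
  obtain ⟨σ, rfl⟩ := hP
  rw [isDS_iff]
  exact permMatrix_mem_doublyStochastic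

lemma mnorm_sum_le {n : ℕ} {N : Matrix (Fin n) (Fin n) ℝ → ℝ} (hN : IsMatrixNorm N)
    {ι : Type*} (s : Finset ι)
    (f : ι → Matrix (Fin n) (Fin n) ℝ) : N (∑ i ∈ s, f i) ≤ ∑ i ∈ s, N (f i) := by
  classical
  induction s using Finset.cons_induction with
  | empty => simp [(hN.2.1 0).2 rfl]
  | cons a s ha ih =>
    rw [Finset.sum_cons, Finset.sum_cons]
    exact le_trans (hN.2.2.1 _ _) (by linarith)

lemma convexOn_normSub {n : ℕ} {N : Matrix (Fin n) (Fin n) ℝ → ℝ} (hN : IsMatrixNorm N)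
    (X : Matrix (Fin n) (Fin n) ℝ) :
    ConvexOn ℝ Set.univ (fun D => N (X - D)) := by
  refine ⟨convex_univ, fun x _ y _ a b ha hb hab => ?_⟩
  have h1 : X - (a • x + b • y) = a • (X - x) + b • (X - y) := by
    have h2 : a • X + b • X = X := by rw [← add_smul, hab, one_smul]
    rw [smul_sub, smul_sub]
    conv_lhs => rw [← h2]
    abel
  show N (X - (a • x + b • y)) ≤ a • N (X - x) + b • N (X - y)
  rw [h1, smul_eq_mul, smul_eq_mul]
  refine le_trans (hN.2.2.1 _ _) ?_
  rw [hN.2.2.2, hN.2.2.2, abs_of_nonneg ha, abs_of_nonneg hb]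

lemma exists_perm_ge {n : ℕ} {N : Matrix (Fin n) (Fin n) ℝ → ℝ} (hN : IsMatrixNorm N)
    (X D : Matrix (Fin n) (Fin n) ℝ) (hD : IsDoublyStochastic D) :
    ∃ σ : Equiv.Perm (Fin n), N (X - D) ≤ N (X - σ.permMatrix ℝ) := by
  have hD' : D ∈ convexHull ℝ {P : Matrix (Fin n) (Fin n) ℝ |
      ∃ σ : Equiv.Perm (Fin n), σ.permMatrix ℝ = P} := by
    rw [← doublyStochastic_eq_convexHull_permMatrix]
    exact (isDS_iff D).1 hD
  obtain ⟨y, ⟨σ, rfl⟩, hxy⟩ :=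
    (convexOn_normSub hN X).exists_ge_of_mem_convexHull (Set.subset_univ _) hD'
  exact ⟨σ, hxy⟩

lemma oneDS {n : ℕ} : IsDoublyStochastic (1 : Matrix (Fin n) (Fin n) ℝ) := by
  rw [isDS_iff]; exact one_mem _

lemma radAt_bddAbove {n : ℕ} {N : Matrix (Fin n) (Fin n) ℝ → ℝ} (hN : IsMatrixNorm N)
    (X : Matrix (Fin n) (Fin n) ℝ) :
    BddAbove ((fun D => N (X - D)) '' {D | IsDoublyStochastic D}) := by
  refine ⟨Finset.univ.sup' Finset.univ_nonempty
    (fun σ : Equiv.Perm (Fin n) => N (X - σ.permMatrix ℝ)), ?_⟩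
  rintro y ⟨D, hD, rfl⟩
  obtain ⟨σ, hσ⟩ := exists_perm_ge hN X D hD
  exact hσ.trans (Finset.le_sup'
    (fun σ : Equiv.Perm (Fin n) => N (X - σ.permMatrix ℝ)) (mem_univ σ))

lemma le_radAt {n : ℕ} {N : Matrix (Fin n) (Fin n) ℝ → ℝ} (hN : IsMatrixNorm N)
    (X D : Matrix (Fin n) (Fin n) ℝ)
    (hD : IsDoublyStochastic D) : N (X - D) ≤ radAt N X :=
  le_csSup (radAt_bddAbove hN X) ⟨D, hD, rfl⟩

lemma radAt_le {n : ℕ} {N : Matrix (Fin n) (Fin n) ℝ → ℝ} (hN : IsMatrixNorm N)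
    (X : Matrix (Fin n) (Fin n) ℝ) {c : ℝ}
    (h : ∀ σ : Equiv.Perm (Fin n), N (X - σ.permMatrix ℝ) ≤ c) : radAt N X ≤ c := by
  refine csSup_le ⟨N (X - 1), 1, oneDS, rfl⟩ ?_
  rintro y ⟨D, hD, rfl⟩
  obtain ⟨σ, hσ⟩ := exists_perm_ge hN X D hD
  exact hσ.trans (h σ)

lemma radAt_nonneg {n : ℕ} {N : Matrix (Fin n) (Fin n) ℝ → ℝ} (hN : IsMatrixNorm N)
    (X : Matrix (Fin n) (Fin n) ℝ) : 0 ≤ radAt N X :=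
  (hN.1 _).trans (le_radAt hN X 1 oneDS)

/-- A Chebyshev center of `Ω_n` relative to a permutation-invariant norm and a convex
permutation-invariant constraint set is equidistant from all permutation matrices, at
distance equal to the Chebyshev radius. -/
theorem chebCenter_equidistant_from_permMatrices {n : ℕ} (hn : 0 < n)
    (N : Matrix (Fin n) (Fin n) ℝ → ℝ) (hN : IsMatrixNorm N) (hNperm : PermInvariantNorm N)
    (R : Set (Matrix (Fin n) (Fin n) ℝ)) (hR : PermInvariantSet R) (hRconv : Convex ℝ R)
    (A : Matrix (Fin n) (Fin n) ℝ) (hA : IsChebCenter N R A)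
    (P : Matrix (Fin n) (Fin n) ℝ) (hP : IsPermMatrix P) :
    N (A - P) = sInf (radAt N '' R) := by
  obtain ⟨hAR, hrad⟩ := hA
  set ρ := sInf (radAt N '' R) with hρ
  have hbdd : BddBelow (radAt N '' R) := by
    refine ⟨0, ?_⟩; rintro y ⟨X, hX, rfl⟩; exact radAt_nonneg hN X
  have hle : N (A - P) ≤ ρ := by
    have := le_radAt hN A P (perm_isDS hP)
    rwa [hrad] at this
  refine le_antisymm hle (not_lt.1 fun hlt => ?_)
  obtain ⟨τ, rfl⟩ := hP
  have hmpos : (0:ℝ) < (Fintype.card (Equiv.Perm (Fin n)) : ℝ) := by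
    exact_mod_cast Fintype.card_pos
  set w : ℝ := ((Fintype.card (Equiv.Perm (Fin n)) : ℝ))⁻¹ with hw
  have hw0 : 0 < w := inv_pos.2 hmpos
  have hsum : ∑ _σ : Equiv.Perm (Fin n), w = 1 := by
    rw [Finset.sum_const, card_univ, nsmul_eq_mul, hw]
    field_simp
  set B := ∑ σ : Equiv.Perm (Fin n), w • ((τ⁻¹ * σ).permMatrix ℝ * A) with hB
  have hBR : B ∈ R := by
    refine hRconv.sum_mem (fun σ _ => hw0.le) hsum (fun σ _ => ?_)
    have := hR ((τ⁻¹ * σ).permMatrix ℝ) 1 A ⟨τ⁻¹ * σ, rfl⟩ ⟨1, permMatrix_one'.symm⟩ hAR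
    rwa [mul_one] at this
  have hterm : ∀ σ π : Equiv.Perm (Fin n),
      N ((τ⁻¹ * σ).permMatrix ℝ * A - π.permMatrix ℝ)
        = N (A - (π * (τ⁻¹ * σ)⁻¹).permMatrix ℝ) := by
    intro σ π
    have h1 : (τ⁻¹ * σ).permMatrix ℝ * (π * (τ⁻¹ * σ)⁻¹).permMatrix ℝ = π.permMatrix ℝ := by
      rw [permMatrix_mul']
      congr 1
      group
    calc N ((τ⁻¹ * σ).permMatrix ℝ * A - π.permMatrix ℝ)
        = N ((τ⁻¹ * σ).permMatrix ℝ * (A - (π * (τ⁻¹ * σ)⁻¹).permMatrix ℝ) * 1) := by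
          rw [mul_one, mul_sub, h1]
      _ = N (A - (π * (τ⁻¹ * σ)⁻¹).permMatrix ℝ) :=
          hNperm _ _ _ ⟨τ⁻¹ * σ, rfl⟩ ⟨1, permMatrix_one'.symm⟩
  have key : ∀ π : Equiv.Perm (Fin n), N (B - π.permMatrix ℝ) < ρ := by
    intro π
    have hsplit : B - π.permMatrix ℝ
        = ∑ σ : Equiv.Perm (Fin n), w • ((τ⁻¹ * σ).permMatrix ℝ * A - π.permMatrix ℝ) := by
      simp only [smul_sub, Finset.sum_sub_distrib]
      rw [← Finset.sum_smul, hsum, one_smul, hB]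
    have hbound : ∀ σ : Equiv.Perm (Fin n),
        N ((τ⁻¹ * σ).permMatrix ℝ * A - π.permMatrix ℝ) ≤ ρ := fun σ => by
      rw [hterm σ π]
      have := le_radAt hN A _ (perm_isDS ⟨π * (τ⁻¹ * σ)⁻¹, rfl⟩)
      rwa [hrad] at this
    have hstrict : N ((τ⁻¹ * π).permMatrix ℝ * A - π.permMatrix ℝ) < ρ := by
      rw [hterm π π]
      have h2 : π * (τ⁻¹ * π)⁻¹ = τ := by group
      rw [h2]
      exact hlt
    calc N (B - π.permMatrix ℝ)
        ≤ ∑ σ : Equiv.Perm (Fin n), N (w • ((τ⁻¹ * σ).permMatrix ℝ * A - π.permMatrix ℝ)) := by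
          rw [hsplit]; exact mnorm_sum_le hN _ _
      _ = ∑ σ : Equiv.Perm (Fin n), w * N ((τ⁻¹ * σ).permMatrix ℝ * A - π.permMatrix ℝ) := by
          refine Finset.sum_congr rfl fun σ _ => ?_
          rw [hN.2.2.2, abs_of_pos hw0]
      _ < ∑ _σ : Equiv.Perm (Fin n), w * ρ := by
          refine Finset.sum_lt_sum
            (fun σ _ => mul_le_mul_of_nonneg_left (hbound σ) hw0.le)
            ⟨π, mem_univ π, mul_lt_mul_of_pos_left hstrict hw0⟩
      _ = ρ := by rw [← Finset.sum_mul, hsum, one_mul]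
  have h1 : ρ ≤ radAt N B := csInf_le hbdd ⟨B, hBR, rfl⟩
  have h2 : radAt N B ≤ Finset.univ.sup' Finset.univ_nonempty
      (fun π : Equiv.Perm (Fin n) => N (B - π.permMatrix ℝ)) :=
    radAt_le hN B (fun σ => Finset.le_sup'
      (fun π : Equiv.Perm (Fin n) => N (B - π.permMatrix ℝ)) (mem_univ σ))
  have h3 : Finset.univ.sup' Finset.univ_nonempty
      (fun π : Equiv.Perm (Fin n) => N (B - π.permMatrix ℝ)) < ρ :=
    (Finset.sup'_lt_iff Finset.univ_nonempty).2 fun π _ => key π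
  linarith
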